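/- arXiv:2408.11164 — 3 statements merged into one kernel-verified Lean document; each statement's English description precedes it below -/
import Mathlib

section
/- The efficiency of the Gaussian kernel relative to the Epanechnikov kernel, eff(𝓝) = (C(𝓔)/C(𝓝))^((n+4)/4), equals 2^(n+2)·(n+4)^(−n/2−1)·Γ(n/2+2), where C(𝓚) = β_𝓚·(n·β_𝓚/α_𝓚²)^(−n/(n+4)). -/
/-!
Raising `C = β (d β / α²)^(-d/(d+4))` to the power `(d+4)/4` gives `β d^(-d/4) (α²)^(d/4)`, so for
kernels with the same `α` the efficiency is just `β_𝓔 / β_𝓝`. Inserting `c_n` and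
`Γ(n/2 + 2) = (n/2 + 1) Γ(n/2 + 1)` makes the factors `π^(n/2)` and `Γ(n/2 + 1)` cancel.
-/

open Real

/-- Volume of the unit ball in `ℝⁿ`: `c_n = π^(n/2) / Γ(n/2 + 1)`. -/
noncomputable def unitBallVol (n : ℕ) : ℝ :=
  Real.pi ^ ((n : ℝ) / 2) / Real.Gamma ((n : ℝ) / 2 + 1)

/-- The paper's `C(𝓚)` in dimension `d`, with `α = α_𝓚` and `β = β_𝓚`. -/
noncomputable def amiseConstant (d α β : ℝ) : ℝ :=
  β * (d * β / α ^ 2) ^ (-d / (d + 4))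

section amiseConstant

variable {d α β : ℝ}

theorem amiseConstant_rpow (hd : 0 ≤ d) (hβ : 0 < β) :
    amiseConstant d α β ^ ((d + 4) / 4) = β * d ^ (-d / 4) * (α ^ 2) ^ (d / 4) := by
  have hβexp : 1 + -d / (d + 4) = 4 / (d + 4) := by field_simp; ring
  have hsplit : amiseConstant d α β
      = β ^ (4 / (d + 4)) * (d ^ (-d / (d + 4)) * ((α ^ 2) ^ (d / (d + 4)))) := by
    rw [amiseConstant, mul_comm d β, mul_div_assoc,
      mul_rpow hβ.le (div_nonneg hd (sq_nonneg α)), div_rpow hd (sq_nonneg α), ← mul_assoc,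
      ← rpow_one_add' hβ.le (by rw [hβexp]; positivity), hβexp, div_eq_mul_inv _ ((α ^ 2) ^ _),
      ← rpow_neg (sq_nonneg α), neg_div, neg_neg]
  rw [hsplit, mul_rpow (by positivity) (by positivity), mul_rpow (by positivity) (by positivity),
    ← rpow_mul hβ.le, ← rpow_mul hd, ← rpow_mul (sq_nonneg α), mul_assoc,
    show 4 / (d + 4) * ((d + 4) / 4) = 1 by field_simp, rpow_one,
    show -d / (d + 4) * ((d + 4) / 4) = -d / 4 by field_simp,
    show d / (d + 4) * ((d + 4) / 4) = d / 4 by field_simp]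

theorem amiseConstant_div_rpow {α₁ α₂ β₁ β₂ : ℝ} (hd : 0 ≤ d) (hβ₁ : 0 < β₁) (hβ₂ : 0 < β₂) :
    (amiseConstant d α₁ β₁ / amiseConstant d α₂ β₂) ^ ((d + 4) / 4)
      = β₁ * (α₁ ^ 2) ^ (d / 4) / (β₂ * (α₂ ^ 2) ^ (d / 4)) := by
  have hC (α β : ℝ) (hβ : 0 < β) : 0 ≤ amiseConstant d α β := by
    unfold amiseConstant; positivity
  have hdpow : d ^ (-d / 4) ≠ 0 := by
    rw [Ne, rpow_eq_zero_iff_of_nonneg hd]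
    rintro ⟨rfl, h⟩
    simp at h
  rw [div_rpow (hC α₁ β₁ hβ₁) (hC α₂ β₂ hβ₂), amiseConstant_rpow hd hβ₁, amiseConstant_rpow hd hβ₂,
    mul_right_comm β₁, mul_right_comm β₂, mul_div_mul_right _ _ hdpow]

end amiseConstant

theorem inv_two_mul_sqrt_pi_rpow_neg (d : ℝ) :
    ((2 * √π) ^ (-d))⁻¹ = 2 ^ d * π ^ (d / 2) := by
  rw [rpow_neg (by positivity), inv_inv, mul_rpow zero_le_two (sqrt_nonneg π), sqrt_eq_rpow,
    ← rpow_mul pi_pos.le]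
  ring_nf

theorem gaussian_kernel_efficiency_general (n : ℕ) :
    let αN : ℝ := 1
    let αE : ℝ := 1
    let βN : ℝ := (2 * Real.sqrt Real.pi) ^ (-(n : ℝ))
    let βE : ℝ := (2 / unitBallVol n) * ((n : ℝ) + 2) * ((n : ℝ) + 4) ^ (-(n : ℝ) / 2 - 1)
    let CN : ℝ := βN * ((n : ℝ) * βN / αN ^ 2) ^ (-(n : ℝ) / ((n : ℝ) + 4))
    let CE : ℝ := βE * ((n : ℝ) * βE / αE ^ 2) ^ (-(n : ℝ) / ((n : ℝ) + 4))
    (CE / CN) ^ (((n : ℝ) + 4) / 4)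
      = 2 ^ ((n : ℝ) + 2) * ((n : ℝ) + 4) ^ (-(n : ℝ) / 2 - 1)
        * Real.Gamma ((n : ℝ) / 2 + 2) := by
  intro αN αE βN βE CN CE
  have hβN : 0 < βN := by positivity
  have hβE : 0 < βE := by
    simp only [βE, unitBallVol]
    positivity
  change (amiseConstant n 1 βE / amiseConstant n 1 βN) ^ _ = _
  rw [amiseConstant_div_rpow n.cast_nonneg hβE hβN]
  simp only [one_pow, one_rpow, mul_one]
  rw [div_eq_mul_inv βE, inv_two_mul_sqrt_pi_rpow_neg, rpow_add two_pos,
    show (n : ℝ) / 2 + 2 = (n / 2 + 1) + 1 by ring, Gamma_add_one (by positivity)]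
  simp only [βE, unitBallVol]
  field_simp
  ring

/-- Efficiency of the Gaussian kernel relative to the Epanechnikov kernel:
`eff(𝓝) = (C(𝓔)/C(𝓝))^((n+4)/4) = 2^(n+2) (n+4)^(-n/2-1) Γ(n/2+2)`,
where `C(𝓚) = β_𝓚 (n β_𝓚 / α_𝓚²)^(-n/(n+4))`, `α_𝓝 = α_𝓔 = 1`,
`β_𝓝 = (2√π)^(-n)`, `β_𝓔 = (2/c_n)(n+2)(n+4)^(-n/2-1)`. -/
theorem gaussian_kernel_efficiency (n : ℕ) (hn : 1 ≤ n) :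
    let αN : ℝ := 1
    let αE : ℝ := 1
    let βN : ℝ := (2 * Real.sqrt Real.pi) ^ (-(n : ℝ))
    let βE : ℝ := (2 / unitBallVol n) * ((n : ℝ) + 2) * ((n : ℝ) + 4) ^ (-(n : ℝ) / 2 - 1)
    let CN : ℝ := βN * ((n : ℝ) * βN / αN ^ 2) ^ (-(n : ℝ) / ((n : ℝ) + 4))
    let CE : ℝ := βE * ((n : ℝ) * βE / αE ^ 2) ^ (-(n : ℝ) / ((n : ℝ) + 4))
    (CE / CN) ^ (((n : ℝ) + 4) / 4)
      = 2 ^ ((n : ℝ) + 2) * ((n : ℝ) + 4) ^ (-(n : ℝ) / 2 - 1)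
        * Real.Gamma ((n : ℝ) / 2 + 2) :=
  gaussian_kernel_efficiency_general n
end

section
/- The sequence eff(n) = 2^(n+2)·(n+4)^(−n/2−1)·Γ(n/2+2) tends to 0 as n → ∞. -/
/-!
Substituting `x = n/2 + 2` turns `eff(n)` into `2^(x-1) x^(1-x) Γ(x)`. Since `Γ` is increasing on
`[2, ∞)`, `Γ(x) ≤ ⌊x⌋!`, and the monotonicity of the Stirling sequence gives `m! ≤ e √m (m/e)^m`.
Together, `2^(x-1) x^(1-x) Γ(x) ≤ (e/2) x^(3/2) (2/e)^x`, which tends to `0` because `2 < e`.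
-/

open Real Filter
open scoped Nat

theorem Stirling.factorial_le_exp_one_mul_sqrt_mul_pow {n : ℕ} (hn : n ≠ 0) :
    (n ! : ℝ) ≤ exp 1 * √n * (n / exp 1) ^ n := by
  obtain ⟨m, rfl⟩ := Nat.exists_eq_succ_of_ne_zero hn
  have h : stirlingSeq (m + 1) ≤ exp 1 / √2 :=
    stirlingSeq_one ▸ stirlingSeq'_antitone (Nat.zero_le m)
  rw [stirlingSeq, div_le_iff₀ (by positivity)] at h
  refine h.trans_eq ?_
  rw [sqrt_mul zero_le_two]
  field_simp

theorem Real.Gamma_le_exp_one_mul_sqrt_mul_rpow {x : ℝ} (hx : exp 1 ≤ x) :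
    Gamma x ≤ exp 1 * √x * (x / exp 1) ^ x := by
  have he : 2 ≤ exp 1 := by linarith [add_one_le_exp (1 : ℝ)]
  set m := ⌊x⌋₊
  have hmx : (m : ℝ) ≤ x := Nat.floor_le (by linarith)
  have hxm : x ≤ m + 1 := (Nat.lt_floor_add_one x).le
  have hm : m ≠ 0 := by
    rintro hm
    rw [hm, Nat.cast_zero, zero_add] at hxm
    linarith
  calc Gamma x ≤ Gamma (m + 1) :=
        Gamma_strictMonoOn_Ici.monotoneOn (by simp; linarith) (by simp; linarith) hxm
    _ = m ! := Gamma_nat_eq_factorial m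
    _ ≤ exp 1 * √m * (m / exp 1) ^ m := Stirling.factorial_le_exp_one_mul_sqrt_mul_pow hm
    _ ≤ exp 1 * √x * (x / exp 1) ^ x := by
      rw [← rpow_natCast]
      gcongr
      calc (m / exp 1) ^ (m : ℝ) ≤ (x / exp 1) ^ (m : ℝ) := by gcongr
        _ ≤ (x / exp 1) ^ x :=
          rpow_le_rpow_of_exponent_le ((one_le_div (exp_pos 1)).2 hx) hmx

theorem two_rpow_mul_rpow_mul_Gamma_le {x : ℝ} (hx : exp 1 ≤ x) :
    2 ^ (x - 1) * x ^ (1 - x) * Gamma x ≤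
      exp 1 / 2 * (x ^ (3 / 2 : ℝ) * exp (-(1 - log 2) * x)) := by
  have hx0 : 0 < x := (exp_pos 1).trans_le hx
  have h32 : x ^ (3 / 2 : ℝ) = x * √x := by
    rw [sqrt_eq_rpow, ← rpow_one_add' hx0.le (by norm_num)]
    norm_num
  have hexp : exp (-(1 - log 2) * x) = 2 ^ x / exp x := by
    rw [rpow_def_of_pos two_pos, ← exp_sub]
    ring_nf
  have hxx : x ^ x ≠ 0 := (rpow_pos_of_pos hx0 x).ne'
  calc 2 ^ (x - 1) * x ^ (1 - x) * Gamma x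
      ≤ 2 ^ (x - 1) * x ^ (1 - x) * (exp 1 * √x * (x / exp 1) ^ x) := by
        gcongr
        exact Gamma_le_exp_one_mul_sqrt_mul_rpow hx
    _ = exp 1 / 2 * (x ^ (3 / 2 : ℝ) * exp (-(1 - log 2) * x)) := by
        rw [h32, hexp, rpow_sub_one two_ne_zero, rpow_sub hx0, rpow_one,
          div_rpow hx0.le (exp_pos 1).le, exp_one_rpow]
        field_simp

theorem tendsto_two_rpow_mul_rpow_mul_Gamma :
    Tendsto (fun x : ℝ => 2 ^ (x - 1) * x ^ (1 - x) * Gamma x) atTop (nhds 0) := by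
  have hb : 0 < 1 - log 2 := by linarith [log_two_lt_d9]
  have hbound :=
    (tendsto_rpow_mul_exp_neg_mul_atTop_nhds_zero (3 / 2) _ hb).const_mul (exp 1 / 2)
  rw [mul_zero] at hbound
  refine squeeze_zero' ?_ ?_ hbound
  · filter_upwards [eventually_gt_atTop 0] with x hx
    have hΓ := Gamma_pos_of_pos hx
    positivity
  · filter_upwards [eventually_ge_atTop (exp 1)] with x hx
    exact two_rpow_mul_rpow_mul_Gamma_le hx

theorem two_rpow_two_mul_sub_two_mul_two_mul_rpow {x : ℝ} (hx : 0 ≤ x) :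
    (2 : ℝ) ^ (2 * x - 2) * (2 * x) ^ (1 - x) = 2 ^ (x - 1) * x ^ (1 - x) := by
  rw [mul_rpow zero_le_two hx, ← mul_assoc, ← rpow_add two_pos]
  ring_nf

/-- The Gaussian-kernel efficiency `eff(n) = 2^(n+2) (n+4)^(-n/2-1) Γ(n/2+2)` tends to 0
as `n → ∞`. -/
theorem gaussian_efficiency_tendsto_zero :
    Tendsto (fun n : ℕ =>
        (2 : ℝ) ^ ((n : ℝ) + 2) * ((n : ℝ) + 4) ^ (-(n : ℝ) / 2 - 1)
          * Real.Gamma ((n : ℝ) / 2 + 2))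
      atTop (nhds 0) := by
  have hx : Tendsto (fun n : ℕ => (n : ℝ) / 2 + 2) atTop atTop :=
    tendsto_atTop_add_const_right _ _ (tendsto_natCast_atTop_atTop.atTop_div_const two_pos)
  refine (tendsto_two_rpow_mul_rpow_mul_Gamma.comp hx).congr fun n => ?_
  rw [Function.comp_apply, ← two_rpow_two_mul_sub_two_mul_two_mul_rpow (by positivity)]
  ring_nf
end

section
/- The sequence eff(n) = 2^(n+2)·(n+4)^(−n/2−1)·Γ(n/2+2) is strictly positive and bounded above by 1 for every n ≥ 1. -/
open Real

/-! With `s = n/2 + 2` the efficiency reads `g s = (2/s)^(s-1) Γ(s)`, and `Γ(s+1) = s Γ(s)` gives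
`g (s+1) (1 + 1/s)^s = 2 g s`. Bernoulli's inequality `(1 + 1/s)^s ≥ 2` for `s ≥ 1` makes `g`
decrease along integer steps, so `eff n ≤ 1` reduces to `g 2 = 1` (even `n`) and
`g (5/2) = (4/5)^(3/2) · (3/4)√π ≤ 1` (odd `n`). -/

noncomputable def gaussianEfficiency (s : ℝ) : ℝ := (2 / s) ^ (s - 1) * Gamma s

theorem gaussianEfficiency_pos {s : ℝ} (hs : 0 < s) : 0 < gaussianEfficiency s :=
  mul_pos (rpow_pos_of_pos (by positivity) _) (Gamma_pos_of_pos hs)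

theorem two_rpow_mul_rpow_mul_Gamma_eq_gaussianEfficiency {x : ℝ} (hx : 0 ≤ x + 4) :
    (2 : ℝ) ^ (x + 2) * (x + 4) ^ (-x / 2 - 1) * Gamma (x / 2 + 2) =
      gaussianEfficiency (x / 2 + 2) := by
  have hfour : (4 : ℝ) ^ (x / 2 + 1) = 2 ^ (x + 2) := by
    rw [show (4 : ℝ) = 2 ^ (2 : ℝ) by norm_num, ← rpow_mul zero_le_two]
    ring_nf
  rw [gaussianEfficiency, show 2 / (x / 2 + 2) = 4 / (x + 4) by field_simp; ring,
    show x / 2 + 2 - 1 = x / 2 + 1 by ring, div_rpow zero_le_four hx, hfour,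
    show -x / 2 - 1 = -(x / 2 + 1) by ring, rpow_neg hx]
  ring

theorem gaussianEfficiency_add_one_mul_one_add_inv_rpow {s : ℝ} (hs : 0 < s) :
    gaussianEfficiency (s + 1) * (1 + s⁻¹) ^ s = 2 * gaussianEfficiency s := by
  have hquot : 2 / (s + 1) * (1 + s⁻¹) = 2 / s := by field_simp
  rw [gaussianEfficiency, gaussianEfficiency, add_sub_cancel_right, Gamma_add_one hs.ne',
    mul_right_comm, ← mul_rpow (by positivity) (by positivity), hquot,
    rpow_sub_one (by positivity)]
  field_simp

theorem gaussianEfficiency_add_one_le {s : ℝ} (hs : 1 ≤ s) :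
    gaussianEfficiency (s + 1) ≤ gaussianEfficiency s := by
  have hs0 : 0 < s := by linarith
  have hbernoulli : 2 ≤ (1 + s⁻¹) ^ s := by
    simpa [mul_inv_cancel₀ hs0.ne', one_add_one_eq_two] using
      one_add_mul_self_le_rpow_one_add (by linarith [inv_pos.2 hs0] : -1 ≤ s⁻¹) hs
  have hstep : gaussianEfficiency (s + 1) * 2 ≤ 2 * gaussianEfficiency s :=
    gaussianEfficiency_add_one_mul_one_add_inv_rpow hs0 ▸
      mul_le_mul_of_nonneg_left hbernoulli (gaussianEfficiency_pos (by linarith)).le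
  linarith

theorem gaussianEfficiency_add_natCast_le {s : ℝ} (hs : 1 ≤ s) (m : ℕ) :
    gaussianEfficiency (s + m) ≤ gaussianEfficiency s := by
  induction m with
  | zero => simp
  | succ m ih =>
    push_cast
    rw [← add_assoc]
    exact (gaussianEfficiency_add_one_le (by linarith [m.cast_nonneg (α := ℝ)])).trans ih

theorem gaussianEfficiency_two : gaussianEfficiency 2 = 1 := by
  norm_num [gaussianEfficiency, Gamma_two]

theorem gaussianEfficiency_five_halves_le_one : gaussianEfficiency (5 / 2) ≤ 1 := by
  have hGamma : Gamma (5 / 2) = 3 / 4 * √π := by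
    rw [show (5 / 2 : ℝ) = 1 / 2 + 1 + 1 by norm_num, Gamma_add_one (by norm_num),
      Gamma_add_one (by norm_num), Gamma_one_half_eq]
    ring
  have hsq : ((4 / 5 : ℝ) ^ (3 / 2 : ℝ)) ^ 2 = 64 / 125 := by
    rw [← rpow_natCast, ← rpow_mul (by norm_num)]
    norm_num
  rw [gaussianEfficiency, hGamma, show (2 : ℝ) / (5 / 2) = 4 / 5 by norm_num,
    show (5 / 2 : ℝ) - 1 = 3 / 2 by norm_num]
  refine (pow_le_one_iff_of_nonneg (by positivity) two_ne_zero).1 ?_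
  rw [mul_pow, mul_pow, hsq, sq_sqrt pi_pos.le]
  nlinarith [pi_lt_d2]

theorem gaussian_efficiency_pos_le_one_general (n : ℕ) :
    0 < (2 : ℝ) ^ ((n : ℝ) + 2) * ((n : ℝ) + 4) ^ (-(n : ℝ) / 2 - 1)
        * Real.Gamma ((n : ℝ) / 2 + 2) ∧
      (2 : ℝ) ^ ((n : ℝ) + 2) * ((n : ℝ) + 4) ^ (-(n : ℝ) / 2 - 1)
        * Real.Gamma ((n : ℝ) / 2 + 2) ≤ 1 := by
  rw [two_rpow_mul_rpow_mul_Gamma_eq_gaussianEfficiency (by positivity)]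
  refine ⟨gaussianEfficiency_pos (by positivity), ?_⟩
  obtain ⟨m, rfl | rfl⟩ := Nat.even_or_odd' n
  · calc gaussianEfficiency (((2 * m : ℕ) : ℝ) / 2 + 2)
        = gaussianEfficiency (2 + m) := by congr 1; push_cast; ring
      _ ≤ gaussianEfficiency 2 := gaussianEfficiency_add_natCast_le one_le_two m
      _ = 1 := gaussianEfficiency_two
  · calc gaussianEfficiency (((2 * m + 1 : ℕ) : ℝ) / 2 + 2)
        = gaussianEfficiency (5 / 2 + m) := by congr 1; push_cast; ring
      _ ≤ gaussianEfficiency (5 / 2) := gaussianEfficiency_add_natCast_le (by norm_num) m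
      _ ≤ 1 := gaussianEfficiency_five_halves_le_one

/-- The Gaussian-kernel efficiency `eff(n) = 2^(n+2) (n+4)^(-n/2-1) Γ(n/2+2)` is strictly
positive and at most 1 for every `n ≥ 1`. -/
theorem gaussian_efficiency_pos_le_one (n : ℕ) (hn : 1 ≤ n) :
    0 < (2 : ℝ) ^ ((n : ℝ) + 2) * ((n : ℝ) + 4) ^ (-(n : ℝ) / 2 - 1)
        * Real.Gamma ((n : ℝ) / 2 + 2) ∧
      (2 : ℝ) ^ ((n : ℝ) + 2) * ((n : ℝ) + 4) ^ (-(n : ℝ) / 2 - 1)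
        * Real.Gamma ((n : ℝ) / 2 + 2) ≤ 1 :=
  gaussian_efficiency_pos_le_one_general n
end
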